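/- arXiv:2310.13371 — 2 statements merged into one kernel-verified Lean document; each statement's English description precedes it below -/
import Mathlib

section
/- Let F_{q̄} : ℝ^{2n} → ℝ^{2n} (as a function of the jet variables (y, y', y'', y''') with y ∈ ℝ^{n−1}) have the structure: components 1..(n−1) equal y, components n..(2n−2) equal y', component n−1+n = F^n_{q̄}(y,y',y''), and component 2n = F^n_{v̄}(y,y',y'',y''') with ∂_{y''}F^n_{q̄} = ∂_{y'''}F^n_{v̄}. If F^n_{q̄} does not depend on y'' (∂_{y''}F^n_{q̄} ≡ 0), then the differentials of the 2n component functions are everywhere linearly dependent. -/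
set_option synthInstance.maxHeartbeats 400000
set_option maxHeartbeats 1000000


/-- on the jet space of `(y,y',y'',y''')` with `y ∈ ℝ^m`
(`m = n-1`), consider the `2n` component functions
`q̄¹..q̄^{n-1} = y`, `q̄ⁿ = F^n_{q̄}(y,y',y'')`, `v̄¹..v̄^{n-1} = y'`,
`v̄ⁿ = F^n_{v̄}(y,y',y'',y''')`, with `∂_{y''}F^n_{q̄} = ∂_{y'''}F^n_{v̄}`.
If `F^n_{q̄}` does not depend on `y''`, then the differentials of these `2n`
functions are everywhere linearly dependent. -/
theorem stmt10 (m : ℕ)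
    (Fq Fv : (Fin 4 → Fin m → ℝ) → ℝ)
    (hFq : ContDiff ℝ (⊤ : ℕ∞) Fq) (hFv : ContDiff ℝ (⊤ : ℕ∞) Fv)
    -- `F^n_{q̄}` is a function of `(y, y', y'')` only:
    (hFqdep : ∀ z w : Fin 4 → Fin m → ℝ,
      z 0 = w 0 → z 1 = w 1 → z 2 = w 2 → Fq z = Fq w)
    -- the relation `∂_{y''}F^n_{q̄} = ∂_{y'''}F^n_{v̄}`:
    (hrel : ∀ (z : Fin 4 → Fin m → ℝ) (d : Fin m → ℝ),
      fderiv ℝ Fq z (Pi.single (2 : Fin 4) d)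
        = fderiv ℝ Fv z (Pi.single (3 : Fin 4) d))
    -- `∂_{y''}F^n_{q̄} ≡ 0`:
    (hnodep : ∀ (z : Fin 4 → Fin m → ℝ) (d : Fin m → ℝ),
      fderiv ℝ Fq z (Pi.single (2 : Fin 4) d) = 0)
    (comp : (Fin m ⊕ Unit) ⊕ (Fin m ⊕ Unit) → (Fin 4 → Fin m → ℝ) → ℝ)
    (hcomp : comp = fun i =>
      match i with
      | .inl (.inl j) => fun z => z 0 j
      | .inl (.inr _) => Fq
      | .inr (.inl j) => fun z => z 1 j
      | .inr (.inr _) => Fv) :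
    ∀ z : Fin 4 → Fin m → ℝ,
      ¬ LinearIndependent ℝ (fun i => fderiv ℝ (comp i) z) := by
  subst hcomp
  intro z hLI
  classical
  have hFqd : Differentiable ℝ Fq := hFq.differentiable (by simp)
  -- the derivative of `Fq` in a direction supported on the `y'''` slot vanishes
  have dir3 : ∀ d : Fin m → ℝ, fderiv ℝ Fq z (Pi.single (3 : Fin 4) d) = 0 := by
    intro d
    set v : Fin 4 → Fin m → ℝ := Pi.single (3 : Fin 4) d with hv
    have hline : HasDerivAt (fun t : ℝ => z + t • v) v 0 := by
      have h1 : HasDerivAt (fun t : ℝ => t • v) ((1 : ℝ) • v) 0 :=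
        (hasDerivAt_id (0 : ℝ)).smul_const v
      simpa using h1.const_add z
    have hF : HasFDerivAt Fq (fderiv ℝ Fq z) ((fun t : ℝ => z + t • v) 0) := by
      simpa using (hFqd z).hasFDerivAt
    have hcompd : HasDerivAt (fun t : ℝ => Fq (z + t • v)) (fderiv ℝ Fq z v) 0 :=
      hF.comp_hasDerivAt 0 hline
    have hconst : (fun t : ℝ => Fq (z + t • v)) = fun _ => Fq z := by
      funext t
      refine hFqdep _ _ ?_ ?_ ?_ <;>
        · funext j
          simp [hv, Pi.single_eq_of_ne (show (0:Fin 4) ≠ 3 by decide),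
            Pi.single_eq_of_ne (show (1:Fin 4) ≠ 3 by decide),
            Pi.single_eq_of_ne (show (2:Fin 4) ≠ 3 by decide)]
    rw [hconst] at hcompd
    have h0 := hcompd.deriv
    simpa using h0.symm
  -- coefficients
  set c : Fin 4 → Fin m → ℝ :=
    fun k j => fderiv ℝ Fq z (Pi.single k (Pi.single j (1 : ℝ)) : Fin 4 → Fin m → ℝ) with hc
  -- expansion of the differential of `Fq`
  have expand : ∀ e : Fin 4 → Fin m → ℝ,
      fderiv ℝ Fq z e = (∑ j, e 0 j * c 0 j) + ∑ j, e 1 j * c 1 j := by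
    intro e
    have hk : ∀ k : Fin 4,
        fderiv ℝ Fq z (Pi.single k (e k)) = ∑ j, e k j * c k j := by
      intro k
      have hek1 : e k = ∑ j, e k j • (Pi.single j (1 : ℝ) : Fin m → ℝ) := by
        conv_lhs => rw [← Finset.univ_sum_single (e k)]
        refine Finset.sum_congr rfl fun j _ => ?_
        rw [← Pi.single_smul, smul_eq_mul, mul_one]
      have hek : Pi.single k (e k)
          = ∑ j, e k j • (Pi.single k (Pi.single j (1 : ℝ)) : Fin 4 → Fin m → ℝ) := by
        funext k'
        rcases eq_or_ne k' k with h | h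
        · subst h
          simp only [Finset.sum_apply, Pi.smul_apply, Pi.single_eq_same]
          exact hek1
        · simp [Finset.sum_apply, Pi.single_eq_of_ne h]
      rw [hek, map_sum]
      refine Finset.sum_congr rfl fun j _ => ?_
      rw [map_smul, smul_eq_mul, hc]
    have he : e = ∑ k : Fin 4, Pi.single k (e k) := (Finset.univ_sum_single e).symm
    conv_lhs => rw [he]
    rw [map_sum, Fin.sum_univ_four, hk 0, hk 1, hnodep z (e 2), dir3 (e 3)]
    ring
  -- the differentials of the coordinate projections
  have hproj : ∀ (k : Fin 4) (j : Fin m) (e : Fin 4 → Fin m → ℝ),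
      fderiv ℝ (fun w : Fin 4 → Fin m → ℝ => w k j) z e = e k j := by
    intro k j e
    have hL : HasFDerivAt (fun w : Fin 4 → Fin m → ℝ => w k j)
        ((ContinuousLinearMap.proj (R := ℝ) (φ := fun _ : Fin m => ℝ) j).comp
          (ContinuousLinearMap.proj (R := ℝ) (φ := fun _ : Fin 4 => Fin m → ℝ) k)) z :=
      ((ContinuousLinearMap.proj (R := ℝ) (φ := fun _ : Fin m => ℝ) j).comp
        (ContinuousLinearMap.proj (R := ℝ) (φ := fun _ : Fin 4 => Fin m → ℝ) k)).hasFDerivAt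
    rw [hL.fderiv]
    rfl
  -- the linear dependence
  rw [Fintype.linearIndependent_iff] at hLI
  set g : (Fin m ⊕ Unit) ⊕ (Fin m ⊕ Unit) → ℝ :=
    Sum.elim (Sum.elim (fun j => -(c 0 j)) (fun _ => 1))
      (Sum.elim (fun j => -(c 1 j)) (fun _ => 0)) with hg
  have hsum : ∑ i, g i •
      fderiv ℝ ((fun i => match i with
        | .inl (.inl j) => fun z => z 0 j
        | .inl (.inr _) => Fq
        | .inr (.inl j) => fun z => z 1 j
        | .inr (.inr _) => Fv) i) z = 0 := by
    apply ContinuousLinearMap.ext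
    intro e
    simp only [ContinuousLinearMap.coe_sum', Finset.sum_apply,
      ContinuousLinearMap.coe_smul', Pi.smul_apply, smul_eq_mul,
      ContinuousLinearMap.zero_apply]
    rw [Fintype.sum_sum_type, Fintype.sum_sum_type, Fintype.sum_sum_type]
    simp only [hg, Sum.elim_inl, Sum.elim_inr, Finset.univ_unique,
      Finset.sum_singleton]
    simp only [hproj]
    rw [expand e]
    have h0 : ∑ x, -c 0 x * e 0 x = -∑ x, e 0 x * c 0 x := by
      rw [← Finset.sum_neg_distrib]
      exact Finset.sum_congr rfl fun j _ => by ring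
    have h1 : ∑ x, -c 1 x * e 1 x = -∑ x, e 1 x * c 1 x := by
      rw [← Finset.sum_neg_distrib]
      exact Finset.sum_congr rfl fun j _ => by ring
    rw [h0, h1]
    ring
  have := hLI g hsum (Sum.inl (Sum.inr ()))
  simp [hg] at this
end

section
/- Let M ∈ ℝ^{2n×2n} be formed by appending to A = [[I,0],[a₁,a₂],[0,I],[b₁,b₂]] two columns taken from a block B whose only possibly-nonzero rows are rows n and 2n, where row-n entries over the y'''-columns are all zero and row-2n entries over the y''-columns are all zero (the equilibrium situation ∂_{y''}F^n_{v̄} = 0). If neither appended column is a y''-column paired with the corresponding y'''-column both having nonzero shared entry p (i.e., if the two appended columns are both y''-columns, or both y'''-columns, or a pair with p = 0), and if the resulting M is invertible, then one column is a y''-column with nonzero row-n entry and the other is a y'''-column with nonzero row-2n entry. -/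
open Matrix

/-- at an equilibrium, a `y''_j` column of the block `B` equals
`p j · e_n` (nonzero entry only in row `n`) and a `y'''_j` column equals
`p j · e_{2n}` (nonzero entry only in row `2n`). If the `2n × 2n` matrix `M`
obtained by appending two such columns (indexed by `c₁ c₂ : Fin (n-1) ⊕ Fin (n-1)`,
`inl` = `y''`-columns, `inr` = `y'''`-columns) to
`A = [[I,0],[a₁,a₂],[0,I],[b₁,b₂]]` is invertible, then one appended column is
a `y''`-column with nonzero row-`n` entry and the other is a `y'''`-column with
nonzero row-`2n` entry. -/
theorem stmt14 (n : ℕ) (hn : 1 ≤ n)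
    (a₁ a₂ b₁ b₂ : Fin (n - 1) → ℝ) (p : Fin (n - 1) → ℝ)
    (c₁ c₂ : Fin (n - 1) ⊕ Fin (n - 1))
    (Bcol : (Fin (n - 1) ⊕ Fin (n - 1)) → ((Fin (n - 1) ⊕ Unit) ⊕ (Fin (n - 1) ⊕ Unit)) → ℝ)
    (hBcol : Bcol = fun c r =>
      match c, r with
      | .inl j, .inl (.inr _) => p j
      | .inr j, .inr (.inr _) => p j
      | _, _ => 0)
    (M : Matrix ((Fin (n - 1) ⊕ Unit) ⊕ (Fin (n - 1) ⊕ Unit))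
        ((Fin (n - 1) ⊕ Unit) ⊕ (Fin (n - 1) ⊕ Unit)) ℝ)
    (hM : M = fun r col =>
      match col with
      | .inl (.inl j) =>
        match r with
        | .inl (.inl i) => if i = j then (1 : ℝ) else 0
        | .inl (.inr _) => a₁ j
        | .inr (.inl _) => 0
        | .inr (.inr _) => b₁ j
      | .inr (.inl j) =>
        match r with
        | .inl (.inl _) => 0
        | .inl (.inr _) => a₂ j
        | .inr (.inl i) => if i = j then (1 : ℝ) else 0
        | .inr (.inr _) => b₂ j
      | .inl (.inr _) => Bcol c₁ r
      | .inr (.inr _) => Bcol c₂ r)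
    (hinv : IsUnit M) :
    ∃ j k : Fin (n - 1), p j ≠ 0 ∧ p k ≠ 0 ∧
      ((c₁ = Sum.inl j ∧ c₂ = Sum.inr k) ∨ (c₁ = Sum.inr k ∧ c₂ = Sum.inl j)) := by
  have hdet : M.det ≠ 0 := by
    have := (Matrix.isUnit_iff_isUnit_det M).mp hinv
    exact isUnit_iff_ne_zero.mp this
  have hker : ¬ ∃ v ≠ 0, M *ᵥ v = 0 := fun h =>
    hdet (Matrix.exists_mulVec_eq_zero_iff.mp h)
  -- a zero column contradicts invertibility
  have hzerocol : ∀ c0, (∀ r, M r c0 = 0) → False := by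
    intro c0 h
    apply hker
    refine ⟨Pi.single c0 1, ?_, ?_⟩
    · intro hv
      have := congrFun hv c0
      simp at this
    · rw [Matrix.mulVec_single]
      funext r
      simp [h r]
  -- two proportional columns contradict invertibility
  have hdep : ∀ (c0 c0' : (Fin (n - 1) ⊕ Unit) ⊕ (Fin (n - 1) ⊕ Unit)) (q q' : ℝ),
      c0 ≠ c0' → q ≠ 0 → (∀ r, q' * M r c0 - q * M r c0' = 0) → False := by
    intro c0 c0' q q' hne hq h
    apply hker
    refine ⟨Pi.single c0 q' - Pi.single c0' q, ?_, ?_⟩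
    · intro hv
      have := congrFun hv c0'
      simp [Pi.single_apply, hne, Ne.symm hne] at this
      exact hq this
    · rw [Matrix.mulVec_sub, Matrix.mulVec_single, Matrix.mulVec_single]
      funext r
      simpa [mul_comm] using h r
  rcases c₁ with j | j <;> rcases c₂ with k | k
  · -- both y'' columns
    exfalso
    by_cases hpj : p j = 0
    · apply hzerocol (Sum.inl (Sum.inr ()))
      intro r
      rcases r with (i | _) | (i | _) <;> simp [hM, hBcol, hpj]
    · apply hdep (Sum.inl (Sum.inr ())) (Sum.inr (Sum.inr ())) (p j) (p k) (by simp) hpj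
      intro r
      rcases r with (i | _) | (i | _) <;> simp [hM, hBcol] <;> ring
  · -- mixed: c₁ = inl j, c₂ = inr k
    refine ⟨j, k, ?_, ?_, Or.inl ⟨rfl, rfl⟩⟩
    · intro hpj
      apply hzerocol (Sum.inl (Sum.inr ()))
      intro r
      rcases r with (i | _) | (i | _) <;> simp [hM, hBcol, hpj]
    · intro hpk
      apply hzerocol (Sum.inr (Sum.inr ()))
      intro r
      rcases r with (i | _) | (i | _) <;> simp [hM, hBcol, hpk]
  · -- mixed: c₁ = inr j, c₂ = inl k
    refine ⟨k, j, ?_, ?_, Or.inr ⟨rfl, rfl⟩⟩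
    · intro hpk
      apply hzerocol (Sum.inr (Sum.inr ()))
      intro r
      rcases r with (i | _) | (i | _) <;> simp [hM, hBcol, hpk]
    · intro hpj
      apply hzerocol (Sum.inl (Sum.inr ()))
      intro r
      rcases r with (i | _) | (i | _) <;> simp [hM, hBcol, hpj]
  · -- both y''' columns
    exfalso
    by_cases hpj : p j = 0
    · apply hzerocol (Sum.inl (Sum.inr ()))
      intro r
      rcases r with (i | _) | (i | _) <;> simp [hM, hBcol, hpj]
    · apply hdep (Sum.inl (Sum.inr ())) (Sum.inr (Sum.inr ())) (p j) (p k) (by simp) hpj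
      intro r
      rcases r with (i | _) | (i | _) <;> simp [hM, hBcol] <;> ring
end
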